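/- For every natural number n, the polynomial R_n satisfies the differential identity d/dz[(1-z^2) dR_n(z)/dz] + n(n+1) R_n(z) = 2[(z-1) dP_n(z)/dz - n P_n(z)] for all real z. -/

import Mathlib

/-- The `N`-th harmonic number `H_N = ∑_{k=1}^N 1/k` (with `H_0 = 0`). -/
noncomputable def H (N : ℕ) : ℝ := ∑ k ∈ Finset.Icc 1 N, (1 : ℝ) / k

/-- The Legendre polynomial of degree `n`,
`P_n(z) = 2^{-n} ∑_{k=0}^{n} (binom(n,k))² (z-1)^{n-k} (z+1)^k`, as a function on `ℝ`. -/
noncomputable def P (n : ℕ) (z : ℝ) : ℝ :=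
  (∑ k ∈ Finset.range (n + 1), ((n.choose k : ℝ)) ^ 2 * (z - 1) ^ (n - k) * (z + 1) ^ k) / 2 ^ n

/-- `R_n(z) = 2(H_{2n} - H_n) P_n(z)
               + 2 ∑_{k=0}^{n-1} (-1)^{n+k} (2k+1)/((n-k)(n+k+1)) P_k(z)`. -/
noncomputable def R (n : ℕ) (z : ℝ) : ℝ :=
  2 * (H (2 * n) - H n) * P n z +
    2 * ∑ k ∈ Finset.range n,
      (-1 : ℝ) ^ (n + k) * (2 * (k : ℝ) + 1) / (((n : ℝ) - k) * ((n : ℝ) + k + 1)) * P k z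

/-!
Put `x = (1 - z) / 2`. Expanding Rodrigues' formula `n! P̃ₙ = (d/dx)ⁿ ((1 - x)ⁿ xⁿ)` for the
shifted Legendre polynomial `P̃ₙ(x) = ∑ₘ (-1)ᵐ C(n,m) C(n+m,n) xᵐ` by Leibniz' rule gives exactly
the sum defining `Pₙ(z)`, so `Pₙ(z) = P̃ₙ(x)`. In the variable `x` the two facts needed become
identities between the coefficients `C(n,m) C(n+m,n)`: Legendre's equation
`(x (1 - x) P̃ₙ')' = -n(n+1) P̃ₙ` is their recurrence in `m`, and
`x P̃ₙ' - n P̃ₙ = ∑_{k<n} (-1)^{n+k} (2k+1) P̃ₖ` telescopes using their recurrence in `n`.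
Hence `Pₖ` is an eigenvector of `y ↦ ((1 - z²) y')' + n(n+1) y` with eigenvalue
`(n - k)(n + k + 1)`; this kills the `Pₙ` term of `Rₙ` and cancels the denominators of the others,
leaving `2 ∑_{k<n} (-1)^{n+k} (2k+1) Pₖ = 2 ((z - 1) Pₙ' - n Pₙ)`.
-/

open Polynomial Finset
open scoped Nat

noncomputable section

def legendreCoeff (n m : ℕ) : ℕ := n.choose m * (n + m).choose n

lemma legendreCoeff_eq_zero_of_lt {n m : ℕ} (h : n < m) : legendreCoeff n m = 0 := by
  simp [legendreCoeff, Nat.choose_eq_zero_of_lt h]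

lemma legendreCoeff_succ_right (n m : ℕ) :
    ((m : ℝ) + 1) ^ 2 * legendreCoeff n (m + 1) =
      ((n : ℝ) - m) * (n + m + 1) * legendreCoeff n m := by
  rcases lt_or_ge n m with h | h
  · simp [legendreCoeff_eq_zero_of_lt h, legendreCoeff_eq_zero_of_lt (h.trans m.lt_succ_self)]
  have key : (m + 1) ^ 2 * legendreCoeff n (m + 1) = (n - m) * (n + m + 1) * legendreCoeff n m := by
    rw [legendreCoeff, legendreCoeff, Nat.choose_symm_add, Nat.choose_symm_add, ← add_assoc]
    calc (m + 1) ^ 2 * (n.choose (m + 1) * (n + m + 1).choose (m + 1))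
        = (n.choose (m + 1) * (m + 1)) * ((n + m + 1).choose (m + 1) * (m + 1)) := by ring
      _ = (n.choose m * (n - m)) * ((n + m + 1) * (n + m).choose m) := by
        rw [Nat.choose_succ_right_eq, Nat.add_one_mul_choose_eq]
      _ = _ := by ring
  exact_mod_cast key

lemma legendreCoeff_succ_left (k m : ℕ) :
    ((k : ℝ) + 1 - m) * legendreCoeff (k + 1) m = (k + m + 1) * legendreCoeff k m := by
  rcases lt_or_ge (k + 1) m with h | h
  · simp [legendreCoeff_eq_zero_of_lt h, legendreCoeff_eq_zero_of_lt (k.lt_succ_self.trans h)]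
  have key : (k + 1 - m) * legendreCoeff (k + 1) m = (k + m + 1) * legendreCoeff k m := by
    rw [legendreCoeff, legendreCoeff, add_right_comm]
    calc (k + 1 - m) * ((k + 1).choose m * (k + m + 1).choose (k + 1))
        = ((k + 1).choose m * (k + 1 - m)) * (k + m + 1).choose (k + 1) := by ring
      _ = k.choose m * ((k + m + 1).choose (k + 1) * (k + 1)) := by
        rw [← Nat.choose_mul_succ_eq]; ring
      _ = _ := by rw [← Nat.add_one_mul_choose_eq]; ring
  have hcast : ((k + 1 - m : ℕ) : ℝ) = (k : ℝ) + 1 - m := by push_cast [Nat.cast_sub h]; ring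
  rw [← hcast]
  exact_mod_cast key

lemma sum_range_neg_one_pow_mul_legendreCoeff (n m : ℕ) :
    ∑ k ∈ range n, (-1 : ℝ) ^ (n + k) * (2 * k + 1) * legendreCoeff k m =
      ((m : ℝ) - n) * legendreCoeff n m := by
  induction n with
  | zero => cases m <;> simp [legendreCoeff]
  | succ n ih =>
    have flip : ∑ k ∈ range n, (-1 : ℝ) ^ (n + 1 + k) * (2 * k + 1) * legendreCoeff k m =
        -∑ k ∈ range n, (-1 : ℝ) ^ (n + k) * (2 * k + 1) * legendreCoeff k m := by
      rw [← sum_neg_distrib]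
      exact sum_congr rfl fun k _ => by ring
    have hn : (-1 : ℝ) ^ (n + 1 + n) = -1 := by
      rw [show n + 1 + n = 2 * n + 1 by ring, pow_succ, pow_mul]; norm_num
    rw [sum_range_succ, flip, ih, hn]
    push_cast
    linear_combination legendreCoeff_succ_left n m

lemma coeff_X_mul_derivative {R : Type*} [CommSemiring R] (p : R[X]) (m : ℕ) :
    (X * derivative p).coeff m = m * p.coeff m := by
  cases m with
  | zero => simp
  | succ m => rw [coeff_X_mul, coeff_derivative]; push_cast; ring

def realShiftedLegendre (n : ℕ) : ℝ[X] := (shiftedLegendre n).map (Int.castRingHom ℝ)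

lemma coeff_realShiftedLegendre (n m : ℕ) :
    (realShiftedLegendre n).coeff m = (-1) ^ m * legendreCoeff n m := by
  simp [realShiftedLegendre, coeff_shiftedLegendre, legendreCoeff, mul_assoc]

lemma derivative_X_mul_one_sub_X_mul_derivative_realShiftedLegendre (n : ℕ) :
    derivative (X * (1 - X) * derivative (realShiftedLegendre n)) =
      (-((n : ℝ) * (n + 1))) • realShiftedLegendre n := by
  ext m
  have hsplit : X * (1 - X) * derivative (realShiftedLegendre n) =
      X * derivative (realShiftedLegendre n) - X * (X * derivative (realShiftedLegendre n)) := by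
    ring
  simp only [hsplit, coeff_derivative, coeff_sub, coeff_X_mul, coeff_X_mul_derivative, coeff_smul,
    coeff_realShiftedLegendre, smul_eq_mul, pow_succ]
  linear_combination -(-1 : ℝ) ^ m * legendreCoeff_succ_right n m

lemma X_mul_derivative_realShiftedLegendre_sub (n : ℕ) :
    X * derivative (realShiftedLegendre n) - (n : ℝ) • realShiftedLegendre n =
      ∑ k ∈ range n, ((-1 : ℝ) ^ (n + k) * (2 * k + 1)) • realShiftedLegendre k := by
  ext m
  simp only [coeff_sub, coeff_X_mul_derivative, coeff_smul, finsetSum_coeff,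
    coeff_realShiftedLegendre, smul_eq_mul]
  have := sum_range_neg_one_pow_mul_legendreCoeff n m
  rw [show ∑ k ∈ range n, (-1 : ℝ) ^ (n + k) * (2 * k + 1) * ((-1) ^ m * legendreCoeff k m) =
      (-1) ^ m * ∑ k ∈ range n, (-1 : ℝ) ^ (n + k) * (2 * k + 1) * legendreCoeff k m by
    rw [mul_sum]; exact sum_congr rfl fun k _ => by ring, this]
  ring

lemma derivative_C_inv_two_mul_one_sub_X :
    derivative (C 2⁻¹ * (1 - X) : ℝ[X]) = C (-2⁻¹) := by
  simp

lemma derivative_one_sub_X_sq_mul_derivative_comp (p : ℝ[X]) :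
    derivative ((1 - X ^ 2) * derivative (p.comp (C 2⁻¹ * (1 - X)))) =
      (derivative (X * (1 - X) * derivative p)).comp (C 2⁻¹ * (1 - X)) := by
  have hweight : (1 - X ^ 2 : ℝ[X]) * C (-2⁻¹) =
      C (-2) * (X * (1 - X) : ℝ[X]).comp (C 2⁻¹ * (1 - X)) := by
    have h2 : C (2⁻¹ : ℝ) * 2 = 1 := by rw [← C_ofNat, ← C_mul]; norm_num
    simp only [mul_comp, X_comp, sub_comp, one_comp, map_neg, C_ofNat]
    linear_combination (-(C (2⁻¹ : ℝ)) * (1 - X) ^ 2) * h2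
  rw [derivative_comp, derivative_C_inv_two_mul_one_sub_X, ← mul_assoc, hweight, mul_assoc,
    ← mul_comp, derivative_C_mul, derivative_comp, derivative_C_inv_two_mul_one_sub_X,
    ← mul_assoc, ← C_mul]
  norm_num

lemma X_sub_one_mul_derivative_comp (p : ℝ[X]) :
    (X - 1) * derivative (p.comp (C 2⁻¹ * (1 - X))) =
      (X * derivative p).comp (C 2⁻¹ * (1 - X)) := by
  rw [derivative_comp, derivative_C_inv_two_mul_one_sub_X, mul_comp, X_comp, map_neg]
  ring

def legendre (n : ℕ) : ℝ[X] := (realShiftedLegendre n).comp (C 2⁻¹ * (1 - X))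

def legendreOperator (n : ℕ) : ℝ[X] →ₗ[ℝ] ℝ[X] :=
  derivative ∘ₗ LinearMap.mulLeft ℝ (1 - X ^ 2) ∘ₗ derivative +
    ((n : ℝ) * (n + 1)) • LinearMap.id

lemma legendreOperator_apply (n : ℕ) (p : ℝ[X]) :
    legendreOperator n p = derivative ((1 - X ^ 2) * derivative p) + ((n : ℝ) * (n + 1)) • p :=
  rfl

lemma legendreOperator_legendre (n k : ℕ) :
    legendreOperator n (legendre k) = (((n : ℝ) - k) * (n + k + 1)) • legendre k := by
  rw [legendreOperator_apply, legendre, derivative_one_sub_X_sq_mul_derivative_comp,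
    derivative_X_mul_one_sub_X_mul_derivative_realShiftedLegendre, smul_comp, ← add_smul]
  congr 1
  ring

lemma X_sub_one_mul_derivative_legendre_sub (n : ℕ) :
    (X - 1) * derivative (legendre n) - (n : ℝ) • legendre n =
      ∑ k ∈ range n, ((-1 : ℝ) ^ (n + k) * (2 * k + 1)) • legendre k := by
  simp only [legendre, X_sub_one_mul_derivative_comp, ← smul_comp, ← sub_comp,
    X_mul_derivative_realShiftedLegendre_sub, Polynomial.sum_comp]

lemma factorial_mul_realShiftedLegendre (n : ℕ) :
    (n ! : ℝ[X]) * realShiftedLegendre n = derivative^[n] ((1 - X) ^ n * X ^ n) := by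
  have := congrArg (map (Int.castRingHom ℝ)) (factorial_mul_shiftedLegendre_eq n)
  rw [mul_comm ((1 - X) ^ n)]
  simpa [realShiftedLegendre, ← iterate_derivative_map] using this

lemma iterate_derivative_one_sub_X_pow {R : Type*} [CommRing R] (n j : ℕ) :
    derivative^[j] ((1 - X : R[X]) ^ n) =
      (-1) ^ j * ((n.descFactorial j : R) • (1 - X) ^ (n - j)) := by
  rw [← X_pow_comp, iterate_derivative_comp_one_sub_X, iterate_derivative_X_pow_eq_smul,
    smul_comp, X_pow_comp]

lemma choose_mul_descFactorial_mul_descFactorial {n k : ℕ} (h : k ≤ n) :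
    n.choose k * n.descFactorial (n - k) * n.descFactorial k = n ! * n.choose k ^ 2 := by
  rw [Nat.descFactorial_eq_factorial_mul_choose, Nat.descFactorial_eq_factorial_mul_choose,
    Nat.choose_symm h, ← Nat.choose_mul_factorial_mul_factorial h]
  ring

lemma eval_legendre (n : ℕ) (z : ℝ) : (legendre n).eval z = P n z := by
  set x : ℝ := 2⁻¹ * (1 - z) with hx
  have hterm : ∀ k ≤ n,
      (n.choose k : ℝ) * ((-1) ^ (n - k) * (n.descFactorial (n - k) * (1 - x) ^ k)) *
        (n.descFactorial k * x ^ (n - k)) =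
      n ! * ((n.choose k : ℝ) ^ 2 * (z - 1) ^ (n - k) * (z + 1) ^ k / 2 ^ n) := by
    intro k hkn
    have hcoeff : (n.choose k : ℝ) * n.descFactorial (n - k) * n.descFactorial k =
        n ! * (n.choose k : ℝ) ^ 2 := by
      exact_mod_cast choose_mul_descFactorial_mul_descFactorial hkn
    have hneg : (-1) ^ (n - k) * x ^ (n - k) = ((z - 1) / 2) ^ (n - k) := by
      rw [← mul_pow, hx]; ring_nf
    have hpow : (2 : ℝ) ^ n = 2 ^ (n - k) * 2 ^ k := by rw [← pow_add, Nat.sub_add_cancel hkn]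
    calc _ = (n.choose k : ℝ) * n.descFactorial (n - k) * n.descFactorial k *
          ((1 - x) ^ k * ((-1) ^ (n - k) * x ^ (n - k))) := by ring
      _ = _ := by
        rw [hneg, hx, show 1 - 2⁻¹ * (1 - z) = (z + 1) / 2 by ring, div_pow, div_pow, hpow,
          hcoeff]
        field_simp
  have hfact : (n ! : ℝ) ≠ 0 := by positivity
  rw [legendre, eval_comp, ← mul_right_inj' hfact, eval_mul, eval_C, eval_sub, eval_one, eval_X,
    ← hx]
  calc (n ! : ℝ) * (realShiftedLegendre n).eval x
      = (derivative^[n] ((1 - X) ^ n * X ^ n)).eval x := by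
        rw [← factorial_mul_realShiftedLegendre, eval_mul, eval_natCast]
    _ = ∑ k ∈ range (n + 1), (n.choose k : ℝ) *
          ((-1) ^ (n - k) * (n.descFactorial (n - k) * (1 - x) ^ k)) *
            (n.descFactorial k * x ^ (n - k)) := by
        rw [iterate_derivative_mul, eval_finsetSum]
        refine sum_congr rfl fun k hk => ?_
        rw [iterate_derivative_one_sub_X_pow, iterate_derivative_X_pow_eq_smul,
          Nat.sub_sub_self (Nat.lt_succ_iff.mp (mem_range.mp hk))]
        simp only [eval_smul, eval_mul, eval_pow, eval_sub, eval_one, eval_X, eval_neg,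
          nsmul_eq_mul, smul_eq_mul, eval_natCast]
        ring
    _ = n ! * P n z := by
        rw [P, sum_div, mul_sum]
        exact sum_congr rfl fun k hk => hterm k (Nat.lt_succ_iff.mp (mem_range.mp hk))

lemma deriv_one_sub_sq_mul_deriv_eval_add (n : ℕ) (p : ℝ[X]) (z : ℝ) :
    deriv (fun z => (1 - z ^ 2) * deriv (fun z => p.eval z) z) z + (n : ℝ) * (n + 1) * p.eval z =
      (legendreOperator n p).eval z := by
  have hinner : (fun z => (1 - z ^ 2) * deriv (fun z => p.eval z) z) =
      fun z => ((1 - X ^ 2) * derivative p).eval z := by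
    funext z
    simp [Polynomial.deriv]
  rw [hinner, Polynomial.deriv, legendreOperator_apply]
  simp

end

/-- For every natural number `n` and all real `z`,
`d/dz[(1-z²) R_n'(z)] + n(n+1) R_n(z) = 2[(z-1) P_n'(z) - n P_n(z)]`. -/
theorem R_differential_identity (n : ℕ) (z : ℝ) :
    deriv (fun z => (1 - z ^ 2) * deriv (R n) z) z + (n : ℝ) * ((n : ℝ) + 1) * R n z =
      2 * ((z - 1) * deriv (P n) z - (n : ℝ) * P n z) := by
  set w : ℕ → ℝ := fun k =>
    (-1 : ℝ) ^ (n + k) * (2 * (k : ℝ) + 1) / (((n : ℝ) - k) * ((n : ℝ) + k + 1))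
  set r : ℝ[X] :=
    (2 * (H (2 * n) - H n)) • legendre n + (2 : ℝ) • ∑ k ∈ range n, w k • legendre k
  have hR : R n = fun z => r.eval z := by
    funext z
    simp [R, r, w, eval_finsetSum, eval_legendre]
  have hP : P n = fun z => (legendre n).eval z := funext fun z => (eval_legendre n z).symm
  have key : legendreOperator n r =
      (2 : ℝ) • ((X - 1) * derivative (legendre n) - (n : ℝ) • legendre n) := by
    rw [X_sub_one_mul_derivative_legendre_sub]
    simp only [r, map_add, map_smul, map_sum, legendreOperator_legendre, sub_self, zero_mul,
      zero_smul, smul_zero, zero_add, smul_smul]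
    congr 1
    refine sum_congr rfl fun k hk => ?_
    have hkn : (k : ℝ) < n := by exact_mod_cast mem_range.mp hk
    congr 1
    simp only [w]
    field_simp [sub_ne_zero.mpr hkn.ne']
  rw [hR, deriv_one_sub_sq_mul_deriv_eval_add, key, hP, Polynomial.deriv]
  simp
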